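/- arXiv:2303.01270 — 2 statements merged into one kernel-verified Lean document; each statement's English description precedes it below -/
import Mathlib

section
/- Let L ⊆ S and κ ∈ [0,1). Then ρ = 1 if and only if ρ^L_κ = 1 (equivalently, ρ < 1 if and only if ρ^L_κ < 1). -/
open scoped Classical ENNReal NNReal

variable {S : Type*}

/-- The `n`-step transition probabilities `P^n(x,y)` (n-th matrix power of `P`). -/
noncomputable def kpow (P : S → S → ℝ) : ℕ → S → S → ℝ
  | 0, x, y => if x = y then 1 else 0
  | n+1, x, y => ∑' w, P x w * kpow P n w y

/-- `P` is a transition probability: nonnegative entries and each row sums to `1`. -/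
def IsTransProb (P : S → S → ℝ) : Prop :=
  (∀ x y, 0 ≤ P x y) ∧ ∀ x, HasSum (P x) 1

/-- `P` is irreducible: for all `x, y` there is `n ≥ 0` with `P^n(x,y) > 0`. -/
def Irred (P : S → S → ℝ) : Prop :=
  ∀ x y, ∃ n, 0 < kpow P n x y

/-- The Green function `G(x,y|z) = ∑_{n ≥ 0} P^n(x,y) zⁿ`, a sum in `[0,∞]`. -/
noncomputable def green (P : S → S → ℝ) (x y : S) (z : ℝ) : ℝ≥0∞ :=
  ∑' n, ENNReal.ofReal (kpow P n x y * z ^ n)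

/-- Radius of convergence of the power series with coefficients `a`,
as the supremum (in `[0,∞]`) of the nonnegative `z` at which the series converges. -/
noncomputable def convRadius (a : ℕ → ℝ) : ℝ≥0∞ :=
  ⨆ (z : ℝ≥0) (_ : Summable fun n => a n * (z : ℝ) ^ n), (z : ℝ≥0∞)

/-- The spectral radius as an extended nonnegative real: the reciprocal of the
radius of convergence of `G(x,x|·)` (independent of `x` when `P` is irreducible). -/
noncomputable def specRadiusE (P : S → S → ℝ) : ℝ≥0∞ :=
  ⨆ x, (convRadius fun n => kpow P n x x)⁻¹

/-- The spectral radius `ρ` of `P`. -/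
noncomputable def specRadius (P : S → S → ℝ) : ℝ :=
  (specRadiusE P).toReal

/-- The `(L,κ)`-lazy version `P^L_κ` of `P`:
`P^L_κ(x,y) = κ·1_{x=y} + (1-κ)P(x,y)` for `x ∈ L`, and `P^L_κ(x,y) = P(x,y)` for `x ∉ L`. -/
noncomputable def lazy (P : S → S → ℝ) (L : Set S) (κ : ℝ) : S → S → ℝ :=
  fun x y => if x ∈ L then (if x = y then κ else 0) + (1 - κ) * P x y else P x y

/-- First-return probabilities: `u_0(x,y) = 0`, `u_1(x,y) = P(x,y)`, and
`u_n(x,y) = ∑_{w ≠ y} P(x,w) u_{n-1}(w,y)` for `n ≥ 2`. -/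
noncomputable def fret (P : S → S → ℝ) : ℕ → S → S → ℝ
  | 0, _, _ => 0
  | 1, x, y => P x y
  | n+2, x, y => ∑' w, if w = y then 0 else P x w * fret P (n+1) w y

/-- The U-function `U(x,y|z) = ∑_{n ≥ 0} u_n(x,y) zⁿ`, a sum in `[0,∞]`. -/
noncomputable def Ufun (P : S → S → ℝ) (x y : S) (z : ℝ) : ℝ≥0∞ :=
  ∑' n, ENNReal.ofReal (fret P n x y * z ^ n)

/-- `r(U|x,y)`, the radius of convergence of `U(x,y|·)`. -/
noncomputable def rU (P : S → S → ℝ) (x y : S) : ℝ≥0∞ :=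
  convRadius fun n => fret P n x y

/-- `P` is rho-recurrent if `G(x,x|1/ρ) = ∞` (for all, equivalently some, `x`). -/
def RhoRecurrent (P : S → S → ℝ) : Prop :=
  ∀ x, green P x x (specRadius P)⁻¹ = ∞

/-- `P` is rho-transient if `G(x,x|1/ρ) < ∞` (for all, equivalently some, `x`). -/
def RhoTransient (P : S → S → ℝ) : Prop :=
  ∀ x, green P x x (specRadius P)⁻¹ ≠ ∞

/-- A rho-recurrent `P` is strictly rho-recurrent if `r(U|x,x) > 1/ρ` for some `x`. -/
def StrictlyRhoRecurrent (P : S → S → ℝ) : Prop :=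
  RhoRecurrent P ∧ ∃ x, ENNReal.ofReal (specRadius P)⁻¹ < rU P x x

/-- A rho-recurrent `P` is critically rho-recurrent if `r(U|x,x) = 1/ρ` for all `x`. -/
def CriticallyRhoRecurrent (P : S → S → ℝ) : Prop :=
  RhoRecurrent P ∧ ∀ x, rU P x x = ENNReal.ofReal (specRadius P)⁻¹

/-!
For irreducible stochastic `P`, `ρ < 1` iff some positive finite `h` satisfies `P h ≤ t h` with
`t < 1`. If `ρ < 1`, the Green function `h = G(·, x₀ | z)` at some `z > 1` is finite by
irreducibility and satisfies `P h ≤ z⁻¹ h`; conversely `P h ≤ t h` gives `Pⁿ(x, x) ≤ tⁿ`, so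
`ρ < 1`. Such an `h` transfers between `P` and its lazy version: `P h ≤ t h` gives
`P^L_κ h ≤ (κ + (1 - κ) t) h`, and for `t ≤ 1` the converse follows by cancelling the lazy part
on `L`. As `ρ ≤ 1` always, the two equivalences coincide.

Kernels and their powers are handled in `ℝ≥0∞`, where `tsum` needs no summability hypotheses.
-/

section Kernel

variable (Q : S → S → ℝ≥0∞)

noncomputable def kernelPow : ℕ → S → S → ℝ≥0∞
  | 0, x, y => if x = y then 1 else 0
  | n + 1, x, y => ∑' w, Q x w * kernelPow n w y

def IsSuperharmonic (t : ℝ≥0∞) (h : S → ℝ≥0∞) : Prop :=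
  ∀ x, ∑' y, Q x y * h y ≤ t * h x

lemma tsum_kernelPow_zero_mul (h : S → ℝ≥0∞) (x : S) :
    ∑' y, kernelPow Q 0 x y * h y = h x := by
  simp [kernelPow]

lemma tsum_kernelPow_succ_mul (n : ℕ) (h : S → ℝ≥0∞) (x : S) :
    ∑' y, kernelPow Q (n + 1) x y * h y = ∑' w, Q x w * ∑' y, kernelPow Q n w y * h y := by
  simp only [kernelPow, ← ENNReal.tsum_mul_right, ← ENNReal.tsum_mul_left, mul_assoc]
  exact ENNReal.tsum_comm

lemma kernelPow_add (m n : ℕ) (x z : S) :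
    kernelPow Q (m + n) x z = ∑' y, kernelPow Q m x y * kernelPow Q n y z := by
  induction m generalizing x with
  | zero => rw [zero_add, tsum_kernelPow_zero_mul]
  | succ m ih =>
    rw [tsum_kernelPow_succ_mul, Nat.add_right_comm, kernelPow]
    simp only [ih]

lemma tsum_kernelPow_eq_one (hQ : ∀ x, ∑' y, Q x y = 1) (n : ℕ) (x : S) :
    ∑' y, kernelPow Q n x y = 1 := by
  induction n generalizing x with
  | zero => simpa using tsum_kernelPow_zero_mul Q 1 x
  | succ n ih => simpa [ih, hQ] using tsum_kernelPow_succ_mul Q n 1 x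

lemma kernelPow_le_one (hQ : ∀ x, ∑' y, Q x y = 1) (n : ℕ) (x y : S) :
    kernelPow Q n x y ≤ 1 :=
  (ENNReal.le_tsum y).trans_eq (tsum_kernelPow_eq_one Q hQ n x)

lemma pow_mul_kernelPow_le {Q' : S → S → ℝ≥0∞} {b : ℝ≥0∞} (hle : ∀ x y, b * Q x y ≤ Q' x y)
    (n : ℕ) (x y : S) : b ^ n * kernelPow Q n x y ≤ kernelPow Q' n x y := by
  induction n generalizing x with
  | zero => simp [kernelPow]
  | succ n ih =>
    calc b ^ (n + 1) * kernelPow Q (n + 1) x y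
        = ∑' w, b * Q x w * (b ^ n * kernelPow Q n w y) := by
          rw [kernelPow, ← ENNReal.tsum_mul_left]
          exact tsum_congr fun w => by ring
      _ ≤ kernelPow Q' (n + 1) x y :=
          ENNReal.tsum_le_tsum fun w => mul_le_mul' (hle x w) (ih w)

variable {Q}

lemma IsSuperharmonic.tsum_kernelPow_mul_le {t : ℝ≥0∞} {h : S → ℝ≥0∞}
    (hsup : IsSuperharmonic Q t h) (n : ℕ) (x : S) :
    ∑' y, kernelPow Q n x y * h y ≤ t ^ n * h x := by
  induction n generalizing x with
  | zero => simp [tsum_kernelPow_zero_mul]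
  | succ n ih =>
    calc ∑' y, kernelPow Q (n + 1) x y * h y
        = ∑' w, Q x w * ∑' y, kernelPow Q n w y * h y := tsum_kernelPow_succ_mul Q n h x
      _ ≤ ∑' w, Q x w * (t ^ n * h w) := ENNReal.tsum_le_tsum fun w => by gcongr; exact ih w
      _ = t ^ n * ∑' w, Q x w * h w := by
          rw [← ENNReal.tsum_mul_left]
          exact tsum_congr fun w => by ring
      _ ≤ t ^ (n + 1) * h x := by
          rw [pow_succ, mul_assoc]
          gcongr
          exact hsup x

lemma IsSuperharmonic.kernelPow_self_le {t : ℝ≥0∞} {h : S → ℝ≥0∞}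
    (hsup : IsSuperharmonic Q t h) (hpos : ∀ x, h x ≠ 0) (hfin : ∀ x, h x ≠ ⊤)
    (n : ℕ) (x : S) : kernelPow Q n x x ≤ t ^ n := by
  refine (ENNReal.mul_le_mul_iff_left (hpos x) (hfin x)).mp ?_
  exact (ENNReal.le_tsum x).trans (hsup.tsum_kernelPow_mul_le n x)

end Kernel

section Green

variable (Q : S → S → ℝ≥0∞)

noncomputable def greenFun (x y : S) (w : ℝ≥0∞) : ℝ≥0∞ :=
  ∑' n, kernelPow Q n x y * w ^ n

variable {Q}

lemma greenFun_ne_zero {w : ℝ≥0∞} (hw : w ≠ 0) {n : ℕ} {x y : S}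
    (hn : kernelPow Q n x y ≠ 0) : greenFun Q x y w ≠ 0 :=
  ENNReal.summable.tsum_ne_zero_iff.mpr ⟨n, mul_ne_zero hn (pow_ne_zero n hw)⟩

lemma kernelPow_mul_greenFun_le (w : ℝ≥0∞) (k : ℕ) (x y z : S) :
    kernelPow Q k x y * w ^ k * greenFun Q y z w ≤ greenFun Q x z w := by
  calc kernelPow Q k x y * w ^ k * greenFun Q y z w
      = ∑' n, kernelPow Q k x y * kernelPow Q n y z * w ^ (k + n) := by
        rw [greenFun, ← ENNReal.tsum_mul_left]
        exact tsum_congr fun n => by ring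
    _ ≤ ∑' n, kernelPow Q (k + n) x z * w ^ (k + n) :=
        ENNReal.tsum_le_tsum fun n => by
          gcongr
          rw [kernelPow_add]
          exact ENNReal.le_tsum (f := fun y => kernelPow Q k x y * kernelPow Q n y z) y
    _ ≤ greenFun Q x z w :=
        ENNReal.tsum_comp_le_tsum_of_injective (add_right_injective k)
          (fun m => kernelPow Q m x z * w ^ m)

lemma greenFun_ne_top {w : ℝ≥0∞} (hw : w ≠ 0) {k : ℕ} {x y z : S}
    (hk : kernelPow Q k x y ≠ 0) (hG : greenFun Q x z w ≠ ⊤) : greenFun Q y z w ≠ ⊤ := by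
  intro htop
  have := kernelPow_mul_greenFun_le (Q := Q) w k x y z
  rw [htop, ENNReal.mul_top (mul_ne_zero hk (pow_ne_zero k hw)), top_le_iff] at this
  exact hG this

lemma isSuperharmonic_greenFun {w : ℝ≥0∞} (hw0 : w ≠ 0) (hw : w ≠ ⊤) (z : S) :
    IsSuperharmonic Q w⁻¹ (fun x => greenFun Q x z w) := by
  intro x
  have hstep : ∑' y, Q x y * greenFun Q y z w = ∑' n, kernelPow Q (n + 1) x z * w ^ n := by
    simp only [greenFun, kernelPow, ← ENNReal.tsum_mul_left, ← ENNReal.tsum_mul_right, mul_assoc]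
    exact ENNReal.tsum_comm
  have hshift : w * ∑' n, kernelPow Q (n + 1) x z * w ^ n ≤ greenFun Q x z w := by
    rw [← ENNReal.tsum_mul_left]
    calc ∑' n, w * (kernelPow Q (n + 1) x z * w ^ n)
        = ∑' n, kernelPow Q (n + 1) x z * w ^ (n + 1) := tsum_congr fun n => by ring
      _ ≤ greenFun Q x z w :=
          ENNReal.tsum_comp_le_tsum_of_injective Nat.succ_injective
            (fun m => kernelPow Q m x z * w ^ m)
  calc ∑' y, Q x y * greenFun Q y z w
      = w⁻¹ * (w * ∑' n, kernelPow Q (n + 1) x z * w ^ n) := by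
        rw [hstep, ← mul_assoc, ENNReal.inv_mul_cancel hw0 hw, one_mul]
    _ ≤ w⁻¹ * greenFun Q x z w := by gcongr

end Green

section RealKernel

variable {P : S → S → ℝ}

noncomputable def ofRealKernel (P : S → S → ℝ) (x y : S) : ℝ≥0∞ :=
  ENNReal.ofReal (P x y)

lemma tsum_ofRealKernel (hP : IsTransProb P) (x : S) : ∑' y, ofRealKernel P x y = 1 := by
  simp only [ofRealKernel]
  rw [← ENNReal.ofReal_tsum_of_nonneg (hP.1 x) (hP.2 x).summable, (hP.2 x).tsum_eq,
    ENNReal.ofReal_one]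

lemma kernelPow_ofRealKernel_ne_top (hP : IsTransProb P) (n : ℕ) (x y : S) :
    kernelPow (ofRealKernel P) n x y ≠ ⊤ :=
  ne_top_of_le_ne_top ENNReal.one_ne_top (kernelPow_le_one _ (tsum_ofRealKernel hP) n x y)

lemma kpow_eq_toReal_kernelPow (hP : IsTransProb P) (n : ℕ) (x y : S) :
    kpow P n x y = (kernelPow (ofRealKernel P) n x y).toReal := by
  induction n generalizing x with
  | zero => by_cases h : x = y <;> simp [kpow, kernelPow, h]
  | succ n ih =>
    rw [kpow, kernelPow, ENNReal.tsum_toReal_eq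
      (f := fun w => ofRealKernel P x w * kernelPow (ofRealKernel P) n w y) fun w =>
      ENNReal.mul_ne_top ENNReal.ofReal_ne_top (kernelPow_ofRealKernel_ne_top hP n w y)]
    refine tsum_congr fun w => ?_
    rw [ENNReal.toReal_mul, ih, ofRealKernel, ENNReal.toReal_ofReal (hP.1 x w)]

lemma kpow_nonneg (hP : IsTransProb P) (n : ℕ) (x y : S) : 0 ≤ kpow P n x y := by
  rw [kpow_eq_toReal_kernelPow hP]
  exact ENNReal.toReal_nonneg

lemma kpow_le_one (hP : IsTransProb P) (n : ℕ) (x y : S) : kpow P n x y ≤ 1 := by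
  rw [kpow_eq_toReal_kernelPow hP]
  exact ENNReal.toReal_le_of_le_ofReal zero_le_one
    (by simpa using kernelPow_le_one _ (tsum_ofRealKernel hP) n x y)

lemma ofReal_kpow (hP : IsTransProb P) (n : ℕ) (x y : S) :
    ENNReal.ofReal (kpow P n x y) = kernelPow (ofRealKernel P) n x y := by
  rw [kpow_eq_toReal_kernelPow hP, ENNReal.ofReal_toReal (kernelPow_ofRealKernel_ne_top hP n x y)]

lemma kpow_pos_iff (hP : IsTransProb P) {n : ℕ} {x y : S} :
    0 < kpow P n x y ↔ kernelPow (ofRealKernel P) n x y ≠ 0 := by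
  rw [← ENNReal.ofReal_pos, ofReal_kpow hP, pos_iff_ne_zero]

lemma green_eq_greenFun (hP : IsTransProb P) {z : ℝ} (hz : 0 ≤ z) (x y : S) :
    green P x y z = greenFun (ofRealKernel P) x y (ENNReal.ofReal z) := by
  refine tsum_congr fun n => ?_
  rw [ENNReal.ofReal_mul (kpow_nonneg hP n x y), ofReal_kpow hP, ENNReal.ofReal_pow hz]

end RealKernel

section SpectralRadius

variable {P : S → S → ℝ}

lemma le_convRadius {a : ℕ → ℝ} {z : ℝ≥0} (h : Summable fun n => a n * (z : ℝ) ^ n) :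
    (z : ℝ≥0∞) ≤ convRadius a :=
  le_iSup₂ (f := fun (z : ℝ≥0) (_ : Summable fun n => a n * (z : ℝ) ^ n) => (z : ℝ≥0∞)) z h

lemma le_convRadius_of_le_pow {a : ℕ → ℝ} (ha : ∀ n, 0 ≤ a n) {t z : ℝ≥0}
    (hb : ∀ n, a n ≤ t ^ n) (htz : t * z < 1) : (z : ℝ≥0∞) ≤ convRadius a := by
  have hgeo := summable_geometric_of_lt_one (by positivity) (by exact_mod_cast htz : (t * z : ℝ) < 1)
  refine le_convRadius (hgeo.of_nonneg_of_le (fun n => mul_nonneg (ha n) (by positivity)) fun n => ?_)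
  rw [mul_pow]
  gcongr
  exact hb n

lemma specRadiusE_le_of_kpow_le (hP : IsTransProb P) {t s : ℝ≥0} (hts : t < s)
    (hb : ∀ n x, kpow P n x x ≤ t ^ n) : specRadiusE P ≤ s := by
  have hs : s ≠ 0 := (zero_le.trans_lt hts).ne'
  refine iSup_le fun x => ?_
  rw [ENNReal.inv_le_iff_inv_le, ← ENNReal.coe_inv hs]
  refine le_convRadius_of_le_pow (kpow_nonneg hP · x x) (hb · x) ?_
  rw [← div_eq_mul_inv]
  exact (div_lt_one (pos_iff_ne_zero.mpr hs)).mpr hts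

lemma specRadiusE_le_one (hP : IsTransProb P) : specRadiusE P ≤ 1 := by
  refine ENNReal.le_of_forall_pos_le_add fun ε hε _ => ?_
  exact_mod_cast specRadiusE_le_of_kpow_le hP (lt_add_of_pos_right 1 hε) fun n x => by
    simpa using kpow_le_one hP n x x

lemma specRadius_le_one (hP : IsTransProb P) : specRadius P ≤ 1 := by
  simpa [specRadius] using ENNReal.toReal_mono ENNReal.one_ne_top (specRadiusE_le_one hP)

lemma specRadius_lt_one_of_isSuperharmonic (hP : IsTransProb P) {t : ℝ≥0∞} (ht : t < 1)
    {h : S → ℝ≥0∞} (hpos : ∀ x, h x ≠ 0) (hfin : ∀ x, h x ≠ ⊤)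
    (hsup : IsSuperharmonic (ofRealKernel P) t h) : specRadius P < 1 := by
  lift t to ℝ≥0 using ht.ne_top
  obtain ⟨s, hts, hs1⟩ := exists_between (by exact_mod_cast ht : t < 1)
  have hb : ∀ n x, kpow P n x x ≤ t ^ n := fun n x => by
    rw [kpow_eq_toReal_kernelPow hP]
    simpa using ENNReal.toReal_mono (by simp) (hsup.kernelPow_self_le hpos hfin n x)
  calc specRadius P ≤ s := by
        simpa [specRadius] using ENNReal.toReal_mono ENNReal.coe_ne_top (specRadiusE_le_of_kpow_le hP hts hb)
    _ < 1 := by exact_mod_cast hs1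

lemma exists_one_lt_green_ne_top (hP : IsTransProb P) (hρ : specRadius P < 1) (x : S) :
    ∃ z : ℝ≥0, 1 < z ∧ green P x x z ≠ ⊤ := by
  have hE : specRadiusE P < 1 := by
    rwa [specRadius, ← ENNReal.toReal_one, ENNReal.toReal_lt_toReal
      (ne_top_of_le_ne_top ENNReal.one_ne_top (specRadiusE_le_one hP)) ENNReal.one_ne_top] at hρ
  have hconv : 1 < convRadius fun n => kpow P n x x :=
    ENNReal.inv_lt_one.mp ((le_iSup (fun x => (convRadius fun n => kpow P n x x)⁻¹) x).trans_lt hE)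
  obtain ⟨z, hz⟩ := lt_iSup_iff.mp hconv
  obtain ⟨hsum, hz1⟩ := lt_iSup_iff.mp hz
  refine ⟨z, by exact_mod_cast hz1, ?_⟩
  rw [green, ← ENNReal.ofReal_tsum_of_nonneg
    (fun n => mul_nonneg (kpow_nonneg hP n x x) (by positivity)) hsum]
  exact ENNReal.ofReal_ne_top

lemma exists_isSuperharmonic_of_specRadius_lt_one [Nonempty S] (hP : IsTransProb P)
    (hirr : Irred P) (hρ : specRadius P < 1) :
    ∃ t < 1, ∃ h : S → ℝ≥0∞, (∀ x, h x ≠ 0) ∧ (∀ x, h x ≠ ⊤) ∧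
      IsSuperharmonic (ofRealKernel P) t h := by
  obtain ⟨x₀⟩ := ‹Nonempty S›
  obtain ⟨z, hz1, hG⟩ := exists_one_lt_green_ne_top hP hρ x₀
  have hz0 : (z : ℝ≥0∞) ≠ 0 := by exact_mod_cast (zero_lt_one.trans hz1).ne'
  rw [green_eq_greenFun hP z.coe_nonneg, ENNReal.ofReal_coe_nnreal] at hG
  refine ⟨(z : ℝ≥0∞)⁻¹, ENNReal.inv_lt_one.mpr (by exact_mod_cast hz1),
    fun x => greenFun (ofRealKernel P) x x₀ z, fun x => ?_, fun x => ?_,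
    isSuperharmonic_greenFun hz0 ENNReal.coe_ne_top x₀⟩
  · obtain ⟨n, hn⟩ := hirr x x₀
    exact greenFun_ne_zero hz0 ((kpow_pos_iff hP).mp hn)
  · obtain ⟨k, hk⟩ := hirr x₀ x
    exact greenFun_ne_top hz0 ((kpow_pos_iff hP).mp hk) hG

theorem specRadius_lt_one_iff_exists_isSuperharmonic [Nonempty S] (hP : IsTransProb P)
    (hirr : Irred P) :
    specRadius P < 1 ↔ ∃ t < 1, ∃ h : S → ℝ≥0∞, (∀ x, h x ≠ 0) ∧ (∀ x, h x ≠ ⊤) ∧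
      IsSuperharmonic (ofRealKernel P) t h :=
  ⟨exists_isSuperharmonic_of_specRadius_lt_one hP hirr,
    fun ⟨_, ht, _, hpos, hfin, hsup⟩ => specRadius_lt_one_of_isSuperharmonic hP ht hpos hfin hsup⟩

end SpectralRadius
lemma le_add_mul_of_add_eq_one {a b t : ℝ≥0∞} (hab : a + b = 1) (ht : t ≤ 1) : t ≤ a + b * t :=
  calc t = a * t + b * t := by rw [← add_mul, hab, one_mul]
    _ ≤ a + b * t := by gcongr; exact mul_le_of_le_one_right' ht

lemma add_mul_lt_one_of_add_eq_one {a b t : ℝ≥0∞} (hab : a + b = 1) (hb : b ≠ 0) (ht : t < 1) :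
    a + b * t < 1 := by
  have ha : a ≠ ⊤ := ne_top_of_le_ne_top ENNReal.one_ne_top (hab ▸ le_self_add)
  have hb' : b ≠ ⊤ := ne_top_of_le_ne_top ENNReal.one_ne_top (hab ▸ le_add_self)
  calc a + b * t < a + b * 1 := ENNReal.add_lt_add_left ha (ENNReal.mul_lt_mul_right hb hb' ht)
    _ = 1 := by rw [mul_one, hab]

section Lazy

variable {P : S → S → ℝ} {L : Set S} {κ : ℝ}

lemma ofReal_add_ofReal_one_sub (hκ0 : 0 ≤ κ) (hκ1 : κ ≤ 1) :
    ENNReal.ofReal κ + ENNReal.ofReal (1 - κ) = 1 := by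
  rw [← ENNReal.ofReal_add hκ0 (sub_nonneg.mpr hκ1)]
  simp

lemma lazy_isTransProb (hP : IsTransProb P) (hκ0 : 0 ≤ κ) (hκ1 : κ ≤ 1) :
    IsTransProb (lazy P L κ) := by
  refine ⟨fun x y => ?_, fun x => ?_⟩
  · by_cases hx : x ∈ L
    · simp only [lazy, if_pos hx]
      have : 0 ≤ (1 - κ) * P x y := mul_nonneg (sub_nonneg.mpr hκ1) (hP.1 x y)
      split_ifs <;> linarith
    · simpa only [lazy, if_neg hx] using hP.1 x y
  · show HasSum (fun y => lazy P L κ x y) 1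
    by_cases hx : x ∈ L
    · have hdiag : HasSum (fun y => if x = y then κ else 0) κ := by
        simpa only [eq_comm] using hasSum_ite_eq x κ
      have := hdiag.add ((hP.2 x).mul_left (1 - κ))
      rw [mul_one, add_sub_cancel] at this
      simpa only [lazy, if_pos hx] using this
    · simpa only [lazy, if_neg hx] using hP.2 x

lemma ofRealKernel_lazy_of_mem (hP : IsTransProb P) (hκ0 : 0 ≤ κ) (hκ1 : κ ≤ 1) {x : S}
    (hx : x ∈ L) (y : S) :
    ofRealKernel (lazy P L κ) x y =
      (if x = y then ENNReal.ofReal κ else 0) + ENNReal.ofReal (1 - κ) * ofRealKernel P x y := by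
  simp only [ofRealKernel, lazy, if_pos hx]
  rw [ENNReal.ofReal_add (by split_ifs <;> simp [hκ0])
    (mul_nonneg (sub_nonneg.mpr hκ1) (hP.1 x y)), ENNReal.ofReal_mul (sub_nonneg.mpr hκ1)]
  split_ifs <;> simp

lemma ofRealKernel_lazy_of_notMem {x : S} (hx : x ∉ L) :
    ofRealKernel (lazy P L κ) x = ofRealKernel P x := by
  funext y
  simp [ofRealKernel, lazy, hx]

lemma tsum_ofRealKernel_lazy_mul_of_mem (hP : IsTransProb P) (hκ0 : 0 ≤ κ) (hκ1 : κ ≤ 1)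
    (h : S → ℝ≥0∞) {x : S} (hx : x ∈ L) :
    ∑' y, ofRealKernel (lazy P L κ) x y * h y =
      ENNReal.ofReal κ * h x + ENNReal.ofReal (1 - κ) * ∑' y, ofRealKernel P x y * h y := by
  simp only [ofRealKernel_lazy_of_mem hP hκ0 hκ1 hx, add_mul, mul_assoc, ENNReal.tsum_add,
    ENNReal.tsum_mul_left, ite_mul, zero_mul]
  simp

lemma IsSuperharmonic.to_lazy (hP : IsTransProb P) (hκ0 : 0 ≤ κ) (hκ1 : κ ≤ 1) {t : ℝ≥0∞}
    (ht : t ≤ 1) {h : S → ℝ≥0∞} (hsup : IsSuperharmonic (ofRealKernel P) t h) :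
    IsSuperharmonic (ofRealKernel (lazy P L κ)) (ENNReal.ofReal κ + ENNReal.ofReal (1 - κ) * t) h := by
  intro x
  by_cases hx : x ∈ L
  · rw [tsum_ofRealKernel_lazy_mul_of_mem hP hκ0 hκ1 h hx, add_mul, mul_assoc]
    gcongr
    exact hsup x
  · rw [ofRealKernel_lazy_of_notMem hx]
    refine (hsup x).trans ?_
    gcongr
    exact le_add_mul_of_add_eq_one (ofReal_add_ofReal_one_sub hκ0 hκ1) ht

lemma IsSuperharmonic.of_lazy (hP : IsTransProb P) (hκ0 : 0 ≤ κ) (hκ1 : κ < 1) {t : ℝ≥0∞}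
    (ht : t ≤ 1) {h : S → ℝ≥0∞} (hfin : ∀ x, h x ≠ ⊤)
    (hsup : IsSuperharmonic (ofRealKernel (lazy P L κ)) t h) :
    IsSuperharmonic (ofRealKernel P) t h := by
  intro x
  by_cases hx : x ∈ L
  · have hb : ENNReal.ofReal (1 - κ) ≠ 0 := by simpa using hκ1
    have hlazy := hsup x
    rw [tsum_ofRealKernel_lazy_mul_of_mem hP hκ0 hκ1.le h hx] at hlazy
    have hmix : t * h x ≤ ENNReal.ofReal κ * h x + ENNReal.ofReal (1 - κ) * (t * h x) := by
      rw [← mul_assoc, ← add_mul]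
      gcongr
      exact le_add_mul_of_add_eq_one (ofReal_add_ofReal_one_sub hκ0 hκ1.le) ht
    refine (ENNReal.mul_le_mul_iff_right hb ENNReal.ofReal_ne_top).mp ?_
    calc ENNReal.ofReal (1 - κ) * ∑' y, ofRealKernel P x y * h y
        ≤ t * h x - ENNReal.ofReal κ * h x :=
          ENNReal.le_sub_of_add_le_left (ENNReal.mul_ne_top ENNReal.ofReal_ne_top (hfin x)) hlazy
      _ ≤ ENNReal.ofReal (1 - κ) * (t * h x) := tsub_le_iff_left.mpr hmix
  · rw [← ofRealKernel_lazy_of_notMem hx]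
    exact hsup x

lemma Irred.to_lazy (hP : IsTransProb P) (hκ0 : 0 ≤ κ) (hκ1 : κ < 1) (hirr : Irred P) :
    Irred (lazy P L κ) := by
  have hb : ENNReal.ofReal (1 - κ) ≠ 0 := by simpa using hκ1
  have hdom : ∀ x y, ENNReal.ofReal (1 - κ) * ofRealKernel P x y ≤ ofRealKernel (lazy P L κ) x y := by
    intro x y
    by_cases hx : x ∈ L
    · rw [ofRealKernel_lazy_of_mem hP hκ0 hκ1.le hx]
      exact le_add_self
    · rw [ofRealKernel_lazy_of_notMem hx]
      exact mul_le_of_le_one_left' (ENNReal.ofReal_le_one.mpr (by linarith))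
  intro x y
  obtain ⟨n, hn⟩ := hirr x y
  refine ⟨n, (kpow_pos_iff (lazy_isTransProb hP hκ0 hκ1.le)).mpr fun h0 => ?_⟩
  have := pow_mul_kernelPow_le _ hdom n x y
  rw [h0, nonpos_iff_eq_zero, mul_eq_zero] at this
  exact this.elim (pow_ne_zero n hb) ((kpow_pos_iff hP).mp hn)

end Lazy

theorem lazy_specRadius_eq_one_iff_general {S : Type*} [Infinite S] (P : S → S → ℝ)
    (hP : IsTransProb P) (hirr : Irred P)
    (L : Set S) (κ : ℝ) (hκ : κ ∈ Set.Ico (0 : ℝ) 1) :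
    (specRadius P = 1 ↔ specRadius (lazy P L κ) = 1) ∧
    (specRadius P < 1 ↔ specRadius (lazy P L κ) < 1) := by
  obtain ⟨hκ0, hκ1⟩ := hκ
  have hPL : IsTransProb (lazy P L κ) := lazy_isTransProb hP hκ0 hκ1.le
  have hb : ENNReal.ofReal (1 - κ) ≠ 0 := by simpa using hκ1
  have hlt : specRadius P < 1 ↔ specRadius (lazy P L κ) < 1 := by
    rw [specRadius_lt_one_iff_exists_isSuperharmonic hP hirr,
      specRadius_lt_one_iff_exists_isSuperharmonic hPL (hirr.to_lazy hP hκ0 hκ1)]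
    constructor
    · rintro ⟨t, ht, h, hpos, hfin, hsup⟩
      exact ⟨_, add_mul_lt_one_of_add_eq_one (ofReal_add_ofReal_one_sub hκ0 hκ1.le) hb ht,
        h, hpos, hfin, hsup.to_lazy hP hκ0 hκ1.le ht.le⟩
    · rintro ⟨t, ht, h, hpos, hfin, hsup⟩
      exact ⟨t, ht, h, hpos, hfin, hsup.of_lazy hP hκ0 hκ1 ht.le hfin⟩
  refine ⟨?_, hlt⟩
  rw [← (specRadius_le_one hP).not_lt_iff_eq, ← (specRadius_le_one hPL).not_lt_iff_eq, hlt]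

theorem lazy_specRadius_eq_one_iff {S : Type*} [Countable S] [Infinite S] (P : S → S → ℝ)
    (hP : IsTransProb P) (hirr : Irred P)
    (L : Set S) (κ : ℝ) (hκ : κ ∈ Set.Ico (0 : ℝ) 1) :
    (specRadius P = 1 ↔ specRadius (lazy P L κ) = 1) ∧
    (specRadius P < 1 ↔ specRadius (lazy P L κ) < 1) :=
  lazy_specRadius_eq_one_iff_general P hP hirr L κ hκ
end

section
/- For every x ∈ S and z > 0: U(x,x|z) > 1 if and only if z > 1/ρ. -/
open scoped Classical ENNReal NNReal

variable {S : Type*}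

/-!
Let `R` be the radius of convergence of `G(x,x|·)`. By irreducibility it does not depend on `x`,
so `1/ρ = R`, and `R < ∞` because `P^{Nk}(x,x) ≥ P^N(x,x)^k` for some `N ≥ 1` with
`P^N(x,x) > 0`. Splitting a path at its first return to `x` gives the renewal equation
`G = 1 + U·G` of power series with nonnegative coefficients, hence `U(x,x|t) < 1` iff
`G(x,x|t) < ∞` for `t ≥ 0`: so `U < 1` on `[0, R)`, and `U(t) < 1` forces `t ≤ R`.
If `U(z) > 1`, lower semicontinuity of `U` gives `U(t) > 1` for some `t < z`, so `z > R`.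
If `z > R` but `U(z) ≤ 1`, then, as `u_0 = 0`, `U(t) ≤ (t/z)·U(z) < 1` for `R < t < z`,
which is impossible.
-/

open Finset

lemma ENNReal.tsum_mul_tsum_eq_tsum_sum_antidiagonal (f g : ℕ → ℝ≥0∞) :
    (∑' n, f n) * ∑' n, g n = ∑' n, ∑ p ∈ antidiagonal n, f p.1 * g p.2 := by
  rw [← ENNReal.tsum_mul_right]
  simp_rw [← ENNReal.tsum_mul_left]
  rw [← ENNReal.tsum_prod (f := fun i j => f i * g j),
    ← HasAntidiagonal.sigmaAntidiagonalEquivProd.tsum_eq, ENNReal.tsum_sigma']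
  exact tsum_congr fun n => Finset.tsum_subtype (antidiagonal n) fun p => f p.1 * g p.2

lemma ENNReal.le_inv_one_sub_of_le_one_add_mul {x u : ℝ≥0∞} (hx : x ≠ ∞)
    (h : x ≤ 1 + u * x) : x ≤ (1 - u)⁻¹ := by
  rw [ENNReal.le_inv_iff_mul_le, mul_comm, ENNReal.sub_mul fun _ _ => hx, one_mul,
    tsub_le_iff_right]
  exact h

section Renewal

structure IsRenewal (a q : ℕ → ℝ≥0∞) : Prop where
  zero : a 0 = 0
  eq : ∀ n, q n = (if n = 0 then 1 else 0) + ∑ p ∈ antidiagonal n, a p.1 * q p.2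

variable {a q : ℕ → ℝ≥0∞}

lemma IsRenewal.mul_pow (h : IsRenewal a q) (t : ℝ≥0∞) :
    IsRenewal (fun n => a n * t ^ n) (fun n => q n * t ^ n) := by
  refine ⟨by simp [h.zero], fun n => ?_⟩
  rw [h.eq n, add_mul, sum_mul]
  congr 1
  · split_ifs with hn <;> simp [hn]
  · refine sum_congr rfl fun p hp => ?_
    rw [← mem_antidiagonal.mp hp, pow_add]
    ring

lemma IsRenewal.tsum_eq (h : IsRenewal a q) :
    ∑' n, q n = 1 + (∑' n, a n) * ∑' n, q n := by
  rw [ENNReal.tsum_mul_tsum_eq_tsum_sum_antidiagonal, ← tsum_ite_eq 0 fun _ => (1 : ℝ≥0∞),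
    ← ENNReal.tsum_add]
  exact tsum_congr h.eq

lemma IsRenewal.tsum_lt_one (h : IsRenewal a q) (hq : ∑' n, q n ≠ ∞) : ∑' n, a n < 1 := by
  by_contra! ha
  have hlt : ∑' n, q n < 1 + ∑' n, q n := by
    rw [add_comm]; exact ENNReal.lt_add_right hq one_ne_zero
  refine hlt.not_ge ?_
  calc 1 + ∑' n, q n ≤ 1 + (∑' n, a n) * ∑' n, q n := by
        gcongr; exact le_mul_of_one_le_left' ha
    _ = ∑' n, q n := h.tsum_eq.symm

-- `∑' n, q n = ∞` solves `G = 1 + U·G` as well, so the partial sums are bounded instead.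
lemma IsRenewal.sum_range_succ_le (h : IsRenewal a q) (N : ℕ) :
    ∑ n ∈ range (N + 1), q n ≤ 1 + (∑' n, a n) * ∑ n ∈ range N, q n := by
  have htrunc : ∀ n ∈ range (N + 1), ∑ p ∈ antidiagonal n, a p.1 * q p.2 =
      ∑ p ∈ antidiagonal n, a p.1 * (range N : Set ℕ).indicator q p.2 := by
    intro n hn
    refine sum_congr rfl fun p hp => ?_
    -- a term with `N ≤ p.2` has `p.1 = 0`, and `a 0 = 0`
    rcases Nat.eq_zero_or_pos p.1 with h0 | h0
    · simp [h0, h.zero]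
    · rw [Set.indicator_of_mem]
      simp only [mem_range, HasAntidiagonal.mem_antidiagonal, coe_range, Set.mem_Iio] at hn hp ⊢
      omega
  calc ∑ n ∈ range (N + 1), q n
      = 1 + ∑ n ∈ range (N + 1), ∑ p ∈ antidiagonal n, a p.1 * q p.2 := by
        rw [sum_congr rfl fun n _ => h.eq n, sum_add_distrib]
        simp
    _ ≤ 1 + ∑' n, ∑ p ∈ antidiagonal n, a p.1 * (range N : Set ℕ).indicator q p.2 := by
        rw [sum_congr rfl htrunc]
        gcongr
        exact ENNReal.sum_le_tsum _
    _ = 1 + (∑' n, a n) * ∑ n ∈ range N, q n := by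
        rw [← ENNReal.tsum_mul_tsum_eq_tsum_sum_antidiagonal, sum_eq_tsum_indicator]

lemma IsRenewal.tsum_ne_top (h : IsRenewal a q) (hq : ∀ n, q n ≠ ∞) (ha : ∑' n, a n < 1) :
    ∑' n, q n ≠ ∞ := by
  have hbound : ∀ N, ∑ n ∈ range N, q n ≤ (1 - ∑' n, a n)⁻¹ := fun N =>
    ENNReal.le_inv_one_sub_of_le_one_add_mul (ENNReal.sum_ne_top.mpr fun n _ => hq n)
      ((sum_le_sum_of_subset (range_subset_range.mpr N.le_succ)).trans
        (h.sum_range_succ_le N))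
  rw [ENNReal.tsum_eq_iSup_nat]
  exact ne_top_of_le_ne_top (ENNReal.inv_ne_top.mpr (tsub_pos_of_lt ha).ne') (iSup_le hbound)

end Renewal

section ConvRadius
variable {a b : ℕ → ℝ}

lemma summable_iff_tsum_ofReal_ne_top {ι : Type*} {f : ι → ℝ} (hf : ∀ i, 0 ≤ f i) :
    Summable f ↔ ∑' i, ENNReal.ofReal (f i) ≠ ∞ := by
  refine ⟨Summable.tsum_ofReal_ne_top, fun h => ?_⟩
  simpa only [ENNReal.toReal_ofReal (hf _)] using ENNReal.summable_toReal h

lemma ofReal_le_convRadius {z : ℝ} (h : Summable fun n => a n * z ^ n) :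
    ENNReal.ofReal z ≤ convRadius a := by
  rcases le_or_gt z 0 with hz | hz
  · simp [ENNReal.ofReal_of_nonpos hz]
  rw [← Real.coe_toNNReal z hz.le] at h
  exact le_iSup₂ (f := fun (w : ℝ≥0) (_ : Summable fun n => a n * (w : ℝ) ^ n) => (w : ℝ≥0∞))
    z.toNNReal h

lemma summable_of_ofReal_lt_convRadius (ha : ∀ n, 0 ≤ a n) {z : ℝ} (hz : 0 ≤ z)
    (h : ENNReal.ofReal z < convRadius a) : Summable fun n => a n * z ^ n := by
  obtain ⟨w, hw⟩ := lt_iSup_iff.mp h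
  obtain ⟨hw, hzw⟩ := lt_iSup_iff.mp hw
  have hzw : z ≤ w := by
    rw [← ENNReal.ofReal_coe_nnreal, ENNReal.ofReal_lt_ofReal_iff_of_nonneg hz] at hzw
    exact hzw.le
  exact hw.of_nonneg_of_le (fun n => mul_nonneg (ha n) (pow_nonneg hz n))
    fun n => mul_le_mul_of_nonneg_left (pow_le_pow_left₀ hz hzw n) (ha n)

lemma convRadius_le_of_le_mul_shift (ha : ∀ n, 0 ≤ a n) {c : ℝ} {k : ℕ}
    (h : ∀ n, a n ≤ c * b (n + k)) : convRadius b ≤ convRadius a := by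
  refine iSup₂_le fun z hz => ?_
  rcases eq_or_lt_of_le z.coe_nonneg with hz0 | hz0
  · simp [show z = 0 from mod_cast hz0.symm]
  have hbound :
      ∀ n, a n * (z : ℝ) ^ n ≤ c * (z : ℝ)⁻¹ ^ k * (b (n + k) * (z : ℝ) ^ (n + k)) :=
    fun n => calc a n * (z : ℝ) ^ n ≤ c * b (n + k) * (z : ℝ) ^ n := by gcongr; exact h n
      _ = c * (z : ℝ)⁻¹ ^ k * (b (n + k) * (z : ℝ) ^ (n + k)) := by
        have : (z : ℝ) ^ k ≠ 0 := by positivity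
        rw [pow_add, inv_pow]
        field_simp
  have hsum := ((summable_nat_add_iff k).mpr hz).mul_left _ |>.of_nonneg_of_le
    (fun n => mul_nonneg (ha n) (pow_nonneg hz0.le n)) hbound
  simpa using ofReal_le_convRadius hsum

lemma convRadius_ne_top_of_pow_le (ha : ∀ n, 0 ≤ a n) {c : ℝ} (hc : 0 < c) {N : ℕ} (hN : 0 < N)
    (h : ∀ k, c ^ k ≤ a (N * k)) : convRadius a ≠ ∞ := by
  intro htop
  set z := c⁻¹ + 1
  have hz1 : 1 ≤ z := by simp only [z]; linarith [inv_pos.mpr hc]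
  have hsum := summable_of_ofReal_lt_convRadius ha (by positivity)
    (htop ▸ ENNReal.ofReal_lt_top : ENNReal.ofReal z < convRadius a)
  have hterm : ∀ k, 1 ≤ a (N * k) * z ^ (N * k) := fun k =>
    calc 1 ≤ (c * z ^ N) ^ k := one_le_pow₀ <| calc
          1 ≤ c * z := by simp only [z]; field_simp; linarith
          _ ≤ c * z ^ N := by gcongr; exact le_self_pow₀ hz1 hN.ne'
      _ = c ^ k * z ^ (N * k) := by rw [mul_pow, pow_mul]
      _ ≤ a (N * k) * z ^ (N * k) := by gcongr; exact h k
  have hlim := hsum.tendsto_atTop_zero.comp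
    (Filter.tendsto_atTop_mono (fun k => Nat.le_mul_of_pos_left k hN) Filter.tendsto_id)
  obtain ⟨k, hk⟩ := (hlim.eventually (gt_mem_nhds one_pos)).exists
  exact (hterm k).not_gt hk

end ConvRadius

lemma fret_add_two (P : S → S → ℝ) (n : ℕ) (x y : S) :
    fret P (n + 2) x y = ∑' w, P x w * if w = y then 0 else fret P (n + 1) w y := by
  simp only [fret, mul_ite, mul_zero]

namespace IsTransProb
variable {P : S → S → ℝ}

lemma summable_mul (hP : IsTransProb P) {f : S → ℝ} (hf : ∀ w, f w ∈ Set.Icc (0 : ℝ) 1)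
    (x : S) : Summable fun w => P x w * f w :=
  (hP.2 x).summable.of_nonneg_of_le (fun w => mul_nonneg (hP.1 x w) (hf w).1)
    fun w => mul_le_of_le_one_right (hP.1 x w) (hf w).2

lemma tsum_mul_mem_Icc (hP : IsTransProb P) {f : S → ℝ} (hf : ∀ w, f w ∈ Set.Icc (0 : ℝ) 1)
    (x : S) : ∑' w, P x w * f w ∈ Set.Icc (0 : ℝ) 1 :=
  ⟨tsum_nonneg fun w => mul_nonneg (hP.1 x w) (hf w).1,
    ((hP.summable_mul hf x).tsum_le_tsum (fun w => mul_le_of_le_one_right (hP.1 x w) (hf w).2)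
      (hP.2 x).summable).trans_eq (hP.2 x).tsum_eq⟩

lemma ofReal_tsum_mul (hP : IsTransProb P) {f : S → ℝ} (hf : ∀ w, f w ∈ Set.Icc (0 : ℝ) 1)
    (x : S) : ENNReal.ofReal (∑' w, P x w * f w) =
      ∑' w, ENNReal.ofReal (P x w) * ENNReal.ofReal (f w) := by
  rw [ENNReal.ofReal_tsum_of_nonneg (fun w => mul_nonneg (hP.1 x w) (hf w).1)
    (hP.summable_mul hf x)]
  exact tsum_congr fun w => ENNReal.ofReal_mul (hP.1 x w)

lemma kpow_mem_Icc (hP : IsTransProb P) : ∀ n x y, kpow P n x y ∈ Set.Icc (0 : ℝ) 1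
  | 0, x, y => by by_cases hxy : x = y <;> simp [kpow, hxy]
  | n + 1, x, _ => hP.tsum_mul_mem_Icc (fun w => hP.kpow_mem_Icc n w _) x

lemma fret_mem_Icc (hP : IsTransProb P) : ∀ n x y, fret P n x y ∈ Set.Icc (0 : ℝ) 1
  | 0, _, _ => by simp [fret]
  | 1, x, y => ⟨hP.1 x y, le_hasSum (hP.2 x) y fun w _ => hP.1 x w⟩
  | n + 2, x, y => by
    rw [fret_add_two]
    refine hP.tsum_mul_mem_Icc (fun w => ?_) x
    split_ifs
    · simp
    · exact hP.fret_mem_Icc (n + 1) w y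

lemma ofReal_kpow_succ (hP : IsTransProb P) (n : ℕ) (x y : S) :
    ENNReal.ofReal (kpow P (n + 1) x y) =
      ∑' w, ENNReal.ofReal (P x w) * ENNReal.ofReal (kpow P n w y) :=
  hP.ofReal_tsum_mul (fun w => hP.kpow_mem_Icc n w y) x

lemma ofReal_fret_add_two (hP : IsTransProb P) (n : ℕ) (x y : S) :
    ENNReal.ofReal (fret P (n + 2) x y) =
      ∑' w, if w = y then 0 else
        ENNReal.ofReal (P x w) * ENNReal.ofReal (fret P (n + 1) w y) := by
  rw [fret_add_two, hP.ofReal_tsum_mul]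
  · exact tsum_congr fun w => by split_ifs <;> simp
  · intro w
    split_ifs
    · simp
    · exact hP.fret_mem_Icc (n + 1) w y

-- Split a path from `x` to `y` at its first visit to `y`.
lemma ofReal_kpow_succ_eq_sum (hP : IsTransProb P) (y : S) : ∀ n x,
    ENNReal.ofReal (kpow P (n + 1) x y) = ∑ p ∈ antidiagonal n,
      ENNReal.ofReal (fret P (p.1 + 1) x y) * ENNReal.ofReal (kpow P p.2 y y)
  | 0, x => by
    rw [hP.ofReal_kpow_succ, tsum_eq_single y fun w hw => by simp [kpow, hw]]
    simp [kpow, fret]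
  | n + 1, x => by
    rw [hP.ofReal_kpow_succ, ENNReal.tsum_eq_add_tsum_ite y, Nat.sum_antidiagonal_succ]
    congr 1
    calc ∑' w, (if w = y then 0 else
          ENNReal.ofReal (P x w) * ENNReal.ofReal (kpow P (n + 1) w y))
        = ∑' w, ∑ p ∈ antidiagonal n, (if w = y then 0 else
            ENNReal.ofReal (P x w) * ENNReal.ofReal (fret P (p.1 + 1) w y)) *
              ENNReal.ofReal (kpow P p.2 y y) := by
          refine tsum_congr fun w => ?_
          split_ifs
          · simp
          · rw [hP.ofReal_kpow_succ_eq_sum y n w, mul_sum]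
            simp only [mul_assoc]
      _ = ∑ p ∈ antidiagonal n, ENNReal.ofReal (fret P (p.1 + 1 + 1) x y) *
            ENNReal.ofReal (kpow P p.2 y y) := by
          rw [Summable.tsum_finsetSum fun _ _ => ENNReal.summable]
          simp only [ENNReal.tsum_mul_right, hP.ofReal_fret_add_two]

lemma isRenewal (hP : IsTransProb P) (x : S) :
    IsRenewal (fun n => ENNReal.ofReal (fret P n x x))
      (fun n => ENNReal.ofReal (kpow P n x x)) where
  zero := by simp [fret]
  eq
    | 0 => by simp [kpow, fret]
    | n + 1 => by simp [Nat.sum_antidiagonal_succ, fret, hP.ofReal_kpow_succ_eq_sum x n x]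

lemma kpow_mul_kpow_le (hP : IsTransProb P) :
    ∀ m n (x y w : S), kpow P m x y * kpow P n y w ≤ kpow P (m + n) x w
  | 0, n, x, y, w => by
    by_cases hxy : x = y
    · simp [kpow, hxy]
    · simp [kpow, hxy, (hP.kpow_mem_Icc n x w).1]
  | m + 1, n, x, y, w => by
    rw [Nat.add_right_comm]
    simp only [kpow]
    rw [← tsum_mul_right]
    refine ((hP.summable_mul (fun v => hP.kpow_mem_Icc m v y) x).mul_right _).tsum_le_tsum
      (fun v => ?_) (hP.summable_mul (fun v => hP.kpow_mem_Icc (m + n) v w) x)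
    rw [mul_assoc]
    exact mul_le_mul_of_nonneg_left (hP.kpow_mul_kpow_le m n v y w) (hP.1 x v)

lemma pow_kpow_le (hP : IsTransProb P) (N k : ℕ) (x : S) :
    kpow P N x x ^ k ≤ kpow P (N * k) x x := by
  induction k with
  | zero => simp [kpow]
  | succ k ih =>
    calc kpow P N x x ^ (k + 1) ≤ kpow P (N * k) x x * kpow P N x x := by
          rw [pow_succ]; gcongr; exact (hP.kpow_mem_Icc N x x).1
      _ ≤ kpow P (N * (k + 1)) x x := hP.kpow_mul_kpow_le _ _ x x x

lemma exists_kpow_self_pos (hP : IsTransProb P) (hirr : Irred P) (x : S) :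
    ∃ N, 0 < N ∧ 0 < kpow P N x x := by
  obtain ⟨y, hy⟩ : ∃ y, 0 < P x y := by
    by_contra! h
    have hzero : P x = 0 := funext fun y => le_antisymm (h y) (hP.1 x y)
    exact one_ne_zero ((hP.2 x).unique (hzero ▸ hasSum_zero))
  obtain ⟨m, hm⟩ := hirr y x
  refine ⟨m + 1, m.succ_pos, ?_⟩
  calc 0 < P x y * kpow P m y x := mul_pos hy hm
    _ ≤ kpow P (m + 1) x x :=
      (hP.summable_mul (fun w => hP.kpow_mem_Icc m w x) x).le_tsum y
        fun w _ => mul_nonneg (hP.1 x w) (hP.kpow_mem_Icc m w x).1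

lemma convRadius_kpow_self_ne_top (hP : IsTransProb P) (hirr : Irred P) (x : S) :
    convRadius (fun n => kpow P n x x) ≠ ∞ := by
  obtain ⟨N, hN, hpos⟩ := hP.exists_kpow_self_pos hirr x
  exact convRadius_ne_top_of_pow_le (fun n => (hP.kpow_mem_Icc n x x).1) hpos hN
    fun k => hP.pow_kpow_le N k x

lemma convRadius_kpow_self_le (hP : IsTransProb P) (hirr : Irred P) (x y : S) :
    convRadius (fun n => kpow P n x x) ≤ convRadius (fun n => kpow P n y y) := by
  obtain ⟨k, hk⟩ := hirr x y
  obtain ⟨m, hm⟩ := hirr y x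
  refine convRadius_le_of_le_mul_shift (fun n => (hP.kpow_mem_Icc n y y).1)
    (c := (kpow P k x y * kpow P m y x)⁻¹) (k := k + m) fun n => ?_
  rw [inv_mul_eq_div, le_div_iff₀' (mul_pos hk hm)]
  calc kpow P k x y * kpow P m y x * kpow P n y y
      = kpow P k x y * kpow P n y y * kpow P m y x := by ring
    _ ≤ kpow P (k + n) x y * kpow P m y x := by
        gcongr
        exact hP.kpow_mul_kpow_le k n x y y
    _ ≤ kpow P (n + (k + m)) x x := by
        rw [show n + (k + m) = k + n + m by ring]
        exact hP.kpow_mul_kpow_le _ _ x y x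

lemma specRadius_inv_eq (hP : IsTransProb P) (hirr : Irred P) (x : S) :
    (specRadius P)⁻¹ = (convRadius fun n => kpow P n x x).toReal := by
  have : Nonempty S := ⟨x⟩
  have hconst : specRadiusE P = (convRadius fun n => kpow P n x x)⁻¹ := by
    rw [specRadiusE, iSup_congr fun y => by
      rw [le_antisymm (hP.convRadius_kpow_self_le hirr y x)
        (hP.convRadius_kpow_self_le hirr x y)],
      iSup_const]
  rw [specRadius, hconst, ENNReal.toReal_inv, inv_inv]

end IsTransProb

lemma green_eq_tsum (P : S → S → ℝ) (x y : S) {z : ℝ} (hz : 0 ≤ z) :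
    green P x y z = ∑' n, ENNReal.ofReal (kpow P n x y) * ENNReal.ofReal z ^ n :=
  tsum_congr fun n => by rw [ENNReal.ofReal_mul' (pow_nonneg hz n), ENNReal.ofReal_pow hz]

lemma Ufun_eq_tsum (P : S → S → ℝ) (x y : S) {z : ℝ} (hz : 0 ≤ z) :
    Ufun P x y z = ∑' n, ENNReal.ofReal (fret P n x y) * ENNReal.ofReal z ^ n :=
  tsum_congr fun n => by rw [ENNReal.ofReal_mul' (pow_nonneg hz n), ENNReal.ofReal_pow hz]

lemma lowerSemicontinuous_Ufun (P : S → S → ℝ) (x y : S) : LowerSemicontinuous (Ufun P x y) :=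
  lowerSemicontinuous_tsum fun n =>
    (ENNReal.continuous_ofReal.comp (by fun_prop)).lowerSemicontinuous

section GeneratingFunctions
variable {P : S → S → ℝ}

lemma Ufun_mul_le (hP : IsTransProb P) (x y : S) {c z : ℝ} (hc0 : 0 ≤ c) (hc1 : c ≤ 1)
    (hz : 0 ≤ z) : Ufun P x y (c * z) ≤ ENNReal.ofReal c * Ufun P x y z := by
  rw [Ufun, Ufun, ← ENNReal.tsum_mul_left]
  refine ENNReal.tsum_le_tsum fun n => ?_
  rw [← ENNReal.ofReal_mul hc0]
  refine ENNReal.ofReal_le_ofReal ?_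
  rcases n with _ | n
  · simp [fret]
  calc fret P (n + 1) x y * (c * z) ^ (n + 1)
      = c ^ (n + 1) * (fret P (n + 1) x y * z ^ (n + 1)) := by ring
    _ ≤ c * (fret P (n + 1) x y * z ^ (n + 1)) := by
        gcongr
        · exact mul_nonneg (hP.fret_mem_Icc _ x y).1 (pow_nonneg hz _)
        · exact pow_le_of_le_one hc0 hc1 n.succ_ne_zero

lemma Ufun_lt_one_iff_green_ne_top (hP : IsTransProb P) (x : S) {z : ℝ} (hz : 0 ≤ z) :
    Ufun P x x z < 1 ↔ green P x x z ≠ ∞ := by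
  have h := (hP.isRenewal x).mul_pow (ENNReal.ofReal z)
  rw [Ufun_eq_tsum P x x hz, green_eq_tsum P x x hz]
  exact ⟨h.tsum_ne_top fun n => ENNReal.mul_ne_top ENNReal.ofReal_ne_top
    (ENNReal.pow_ne_top ENNReal.ofReal_ne_top), h.tsum_lt_one⟩

lemma green_ne_top_iff_summable (hP : IsTransProb P) (x : S) {z : ℝ} (hz : 0 ≤ z) :
    green P x x z ≠ ∞ ↔ Summable fun n => kpow P n x x * z ^ n :=
  (summable_iff_tsum_ofReal_ne_top fun n =>
    mul_nonneg (hP.kpow_mem_Icc n x x).1 (pow_nonneg hz n)).symm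

lemma Ufun_lt_one_of_ofReal_lt_convRadius (hP : IsTransProb P) (x : S) {z : ℝ} (hz : 0 ≤ z)
    (h : ENNReal.ofReal z < convRadius fun n => kpow P n x x) : Ufun P x x z < 1 := by
  rw [Ufun_lt_one_iff_green_ne_top hP x hz, green_ne_top_iff_summable hP x hz]
  exact summable_of_ofReal_lt_convRadius (fun n => (hP.kpow_mem_Icc n x x).1) hz h

lemma ofReal_le_convRadius_of_Ufun_lt_one (hP : IsTransProb P) (x : S) {z : ℝ} (hz : 0 ≤ z)
    (h : Ufun P x x z < 1) : ENNReal.ofReal z ≤ convRadius fun n => kpow P n x x := by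
  rw [Ufun_lt_one_iff_green_ne_top hP x hz, green_ne_top_iff_summable hP x hz] at h
  exact ofReal_le_convRadius h

end GeneratingFunctions

theorem Ufun_gt_one_iff_general {S : Type*} (P : S → S → ℝ)
    (hP : IsTransProb P) (hirr : Irred P)
    (x : S) (z : ℝ) (hz : 0 < z) :
    1 < Ufun P x x z ↔ (specRadius P)⁻¹ < z := by
  rw [hP.specRadius_inv_eq hirr x]
  set R := convRadius fun n => kpow P n x x
  have hR : R ≠ ∞ := hP.convRadius_kpow_self_ne_top hirr x
  constructor
  · intro hU
    by_contra! hzR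
    obtain ⟨t, hUt, ht0, htz⟩ := (((lowerSemicontinuous_Ufun P x x z 1 hU).filter_mono
      nhdsWithin_le_nhds).and (Ioo_mem_nhdsLT hz)).exists
    have htR : ENNReal.ofReal t < R :=
      (ENNReal.ofReal_lt_iff_lt_toReal ht0.le hR).mpr (htz.trans_le hzR)
    exact (Ufun_lt_one_of_ofReal_lt_convRadius hP x ht0.le htR).not_gt hUt
  · intro hRz
    by_contra! hU
    obtain ⟨z', hRz', hz'z⟩ := exists_between hRz
    have hz' : 0 ≤ z' := ENNReal.toReal_nonneg.trans hRz'.le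
    have hUz' : Ufun P x x z' < 1 := calc
      Ufun P x x z' = Ufun P x x (z' / z * z) := by rw [div_mul_cancel₀ z' hz.ne']
      _ ≤ ENNReal.ofReal (z' / z) * Ufun P x x z :=
        Ufun_mul_le hP x x (by positivity) ((div_le_one hz).mpr hz'z.le) hz.le
      _ ≤ ENNReal.ofReal (z' / z) := mul_le_of_le_one_right' hU
      _ < 1 := ENNReal.ofReal_lt_one.mpr ((div_lt_one hz).mpr hz'z)
    exact hRz'.not_ge ((ENNReal.ofReal_le_iff_le_toReal hR).mp
      (ofReal_le_convRadius_of_Ufun_lt_one hP x hz' hUz'))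

theorem Ufun_gt_one_iff {S : Type*} [Countable S] [Infinite S] (P : S → S → ℝ)
    (hP : IsTransProb P) (hirr : Irred P)
    (x : S) (z : ℝ) (hz : 0 < z) :
    1 < Ufun P x x z ↔ (specRadius P)⁻¹ < z :=
  Ufun_gt_one_iff_general P hP hirr x z hz
end
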